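/- Let k be a field of characteristic zero with α, β ∈ k, β ≠ 0, satisfying α² + β² = -3. The subgroup of GL₄(k) generated by the matrices R and S above (with R³ = S⁴ = I, SRS⁻¹ = R⁻¹) has order exactly 12; i.e., the representation of Dic₁₂ is faithful. -/

import Mathlib

/-!
`R` has order 3, `S` has order 4 and `S` conjugates `R` to its inverse, so `⟨S⟩` normalizes
`⟨R⟩` and the generated group is the product set `⟨R⟩ * ⟨S⟩`, of size at most `3 * 4`. Both `3`
and `4` divide its order by Lagrange, and they are coprime, so the order is exactly `12`.
-/

open scoped Pointwise

namespace Subgroup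

variable {G : Type*} [Group G]

theorem mem_normalizer_zpowers_of_conj_eq_inv {g r : G} (h : g * r * g⁻¹ = r⁻¹) :
    g ∈ normalizer (zpowers r) := by
  rw [mem_normalizer_iff_map_conj_eq, MonoidHom.map_zpowers]
  simp [MulAut.conj_apply, h]

theorem card_closure_pair_of_conj_eq_inv {r s : G} (hsr : s * r * s⁻¹ = r⁻¹)
    (hr : IsOfFinOrder r) (hs : IsOfFinOrder s) (hcop : (orderOf r).Coprime (orderOf s)) :
    Nat.card (closure {r, s}) = orderOf r * orderOf s := by
  have hsup : closure {r, s} = zpowers r ⊔ zpowers s := by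
    rw [Set.insert_eq, closure_union, zpowers_eq_closure, zpowers_eq_closure]
  have hmul : (closure {r, s} : Set G) = (zpowers r : Set G) * (zpowers s : Set G) := by
    rw [hsup, coe_mul_of_right_le_normalizer_left _ _
      (zpowers_le.mpr (mem_normalizer_zpowers_of_conj_eq_inv hsr))]
  have hfin : Finite (closure {r, s}) :=
    Set.finite_coe_iff.mpr (hmul ▸ hr.finite_zpowers.mul hs.finite_zpowers)
  have hle : Nat.card (closure {r, s}) ≤ orderOf r * orderOf s := by
    rw [← Nat.card_zpowers r, ← Nat.card_zpowers s]
    exact (Nat.card_congr (Equiv.setCongr hmul)).trans_le Set.natCard_mul_le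
  refine le_antisymm hle (Nat.le_of_dvd Nat.card_pos (hcop.mul_dvd_of_dvd_of_dvd ?_ ?_))
  · rw [← Nat.card_zpowers r, hsup]
    exact card_dvd_of_le le_sup_left
  · rw [← Nat.card_zpowers s, hsup]
    exact card_dvd_of_le le_sup_right

end Subgroup

namespace Dic12Rep

open Matrix

variable (k : Type*) [Field k]

def matR : Matrix (Fin 4) (Fin 4) k :=
  !![0, -1, 0, 0; 1, -1, 0, 0; 0, 0, 0, -1; 0, 0, 1, -1]

variable {k} in
def matS (α β : k) : Matrix (Fin 4) (Fin 4) k :=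
  !![0, 1, 0, 0; 1, 0, 0, 0;
    0, 0, (α - 1) / β, (-α - 1) / β; 0, 0, -2 / β, (-α + 1) / β]

theorem orderOf_matR : orderOf (matR k) = 3 := by
  refine orderOf_eq_prime ?_ fun h ↦ ?_
  · ext i j
    fin_cases i <;> fin_cases j <;> simp [matR, pow_succ, mul_apply, Fin.sum_univ_four]
  · simpa [matR] using congr_fun (congr_fun h 0) 0

variable {k} {α β : k}

/-- The lower block has trace `0` and determinant `(-α² - 3) / β² = 1`, so it squares to `-1`. -/
theorem matS_sq (hβ : β ≠ 0) (h : α ^ 2 + β ^ 2 = -3) :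
    matS α β ^ 2 = diagonal ![1, 1, -1, -1] := by
  ext i j
  fin_cases i <;> fin_cases j <;> simp [matS, sq, mul_apply, Fin.sum_univ_four] <;> field_simp <;>
    first
    | ring1
    | linear_combination h

theorem orderOf_matS [CharZero k] (hβ : β ≠ 0) (h : α ^ 2 + β ^ 2 = -3) :
    orderOf (matS α β) = 4 := by
  refine orderOf_eq_prime_pow (p := 2) (n := 1) (fun h1 ↦ ?_) ?_
  · have := congr_fun (congr_fun h1 2) 2
    simp [matS_sq hβ h] at this
    norm_num at this
  · rw [pow_succ, pow_one, pow_mul, matS_sq hβ h, diagonal_pow]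
    ext i j
    fin_cases i <;> fin_cases j <;> simp

theorem matS_mul_matR : matS α β * matR k = matR k ^ 2 * matS α β := by
  ext i j
  fin_cases i <;> fin_cases j <;> simp [matR, matS, sq, mul_apply, Fin.sum_univ_four] <;> ring

end Dic12Rep

theorem stmt8 (k : Type*) [Field k] [CharZero k]
    (α β : k) (hβ : β ≠ 0) (h : α ^ 2 + β ^ 2 = -3)
    (R S : (Matrix (Fin 4) (Fin 4) k)ˣ)
    (hR : (R : Matrix (Fin 4) (Fin 4) k) =
      !![0, -1, 0, 0; 1, -1, 0, 0; 0, 0, 0, -1; 0, 0, 1, -1])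
    (hS : (S : Matrix (Fin 4) (Fin 4) k) =
      !![0, 1, 0, 0; 1, 0, 0, 0;
        0, 0, (α - 1) / β, (-α - 1) / β; 0, 0, -2 / β, (-α + 1) / β]) :
    Nat.card (Subgroup.closure ({R, S} : Set (Matrix (Fin 4) (Fin 4) k)ˣ)) = 12 := by
  have hR' : (R : Matrix (Fin 4) (Fin 4) k) = Dic12Rep.matR k := hR
  have hS' : (S : Matrix (Fin 4) (Fin 4) k) = Dic12Rep.matS α β := hS
  have hordR : orderOf R = 3 := by rw [← orderOf_units, hR', Dic12Rep.orderOf_matR]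
  have hordS : orderOf S = 4 := by rw [← orderOf_units, hS', Dic12Rep.orderOf_matS hβ h]
  have hRinv : R⁻¹ = R ^ 2 := by
    have hR3 : R ^ 3 = 1 := hordR ▸ pow_orderOf_eq_one R
    rw [inv_eq_iff_mul_eq_one, ← pow_succ', hR3]
  have hSR : S * R = R ^ 2 * S :=
    Units.ext (by push_cast [hR', hS']; exact Dic12Rep.matS_mul_matR)
  rw [Subgroup.card_closure_pair_of_conj_eq_inv (by rw [hRinv, hSR, mul_inv_cancel_right])
    (orderOf_pos_iff.mp (by omega)) (orderOf_pos_iff.mp (by omega)) (by norm_num [hordR, hordS]),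
    hordR, hordS]
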